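/- Let m ≥ 1, let Z be any real symmetric m×m matrix, and let Y be the 5×m real matrix all of whose entries are 0 except Y 5 1 = −1. Let X = [[2, 0, −1, 0, 0], [0, 2, 0, −1, 0], [−1, 0, 2, 0, −1], [0, −1, 0, 2, −1], [0, 0, −1, −1, 2]] and X' = [[2, −1, 0, 0, 0], [−1, 2, 0, 0, 0], [0, 0, 2, −1, 0], [0, 0, −1, 2, −√2], [0, 0, 0, −√2, 2]]. Then the block matrix [[X, Y], [Yᵀ, Z]] is positive definite if and only if the block matrix [[X', Y], [Yᵀ, Z]] is positive definite. -/

import Mathlib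

open Matrix

noncomputable def Umat : Matrix (Fin 5) (Fin 5) ℝ :=
  !![Real.sqrt 2 / 2, -(Real.sqrt 2 / 2), 0, 0, 0;
     0, 0, Real.sqrt 2 / 2, -(Real.sqrt 2 / 2), 0;
     Real.sqrt 2 / 2, Real.sqrt 2 / 2, 0, 0, 0;
     0, 0, Real.sqrt 2 / 2, Real.sqrt 2 / 2, 0;
     0, 0, 0, 0, 1]

lemma hUt : Umatᵀ =
  !![Real.sqrt 2 / 2, 0, Real.sqrt 2 / 2, 0, 0;
     -(Real.sqrt 2 / 2), 0, Real.sqrt 2 / 2, 0, 0;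
     0, Real.sqrt 2 / 2, 0, Real.sqrt 2 / 2, 0;
     0, -(Real.sqrt 2 / 2), 0, Real.sqrt 2 / 2, 0;
     0, 0, 0, 0, 1] := by
  ext i j
  fin_cases i <;> fin_cases j <;> simp [Umat, Matrix.vecHead, Matrix.vecTail]

set_option maxHeartbeats 1000000 in
lemma hUU : Umat * Umatᵀ = 1 := by
  have hs : Real.sqrt 2 * Real.sqrt 2 = 2 := Real.mul_self_sqrt (by norm_num)
  rw [hUt]
  ext i j
  fin_cases i <;> fin_cases j <;>
    simp [Umat, Matrix.mul_apply, Fin.sum_univ_five, Matrix.one_apply, Matrix.vecHead, Matrix.vecTail] <;>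
    linarith [hs]

set_option maxHeartbeats 1000000 in
lemma hUXU : Umat * !![2, 0, -1, 0, 0;
           0, 2, 0, -1, 0;
           -1, 0, 2, 0, -1;
           0, -1, 0, 2, -1;
           0, 0, -1, -1, 2] * Umatᵀ =
    !![2, -1, 0, 0, 0;
           -1, 2, 0, 0, 0;
           0, 0, 2, -1, 0;
           0, 0, -1, 2, -Real.sqrt 2;
           0, 0, 0, -Real.sqrt 2, 2] := by
  have hs : Real.sqrt 2 * Real.sqrt 2 = 2 := Real.mul_self_sqrt (by norm_num)
  rw [hUt]
  ext i j
  fin_cases i <;> fin_cases j <;>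
    simp [Umat, Matrix.mul_apply, Fin.sum_univ_five, Matrix.vecHead, Matrix.vecTail] <;>
    linarith [hs]

lemma posdef_congr {n : Type*} [Fintype n] [DecidableEq n]
    {M U : Matrix n n ℝ} (hU : U * Uᵀ = 1) (hM : M.PosDef) :
    (U * M * Uᵀ).PosDef := by
  have hU' : Uᵀ * U = 1 := mul_eq_one_comm.mp hU
  rw [Matrix.posDef_iff_dotProduct_mulVec]
  constructor
  · have h1 : (U * M * Uᵀ)ᴴ = U * Mᴴ * Uᵀ := by
      simp [Matrix.conjTranspose_mul, Matrix.mul_assoc]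
    rw [Matrix.IsHermitian, h1, hM.1]
  · intro x hx
    have hx' : Uᵀ *ᵥ x ≠ 0 := by
      intro h
      apply hx
      have := congrArg (fun v => U *ᵥ v) h
      simpa [Matrix.mulVec_mulVec, hU] using this
    have key : star x ⬝ᵥ ((U * M * Uᵀ) *ᵥ x)
        = star (Uᵀ *ᵥ x) ⬝ᵥ (M *ᵥ (Uᵀ *ᵥ x)) := by
      calc star x ⬝ᵥ ((U * M * Uᵀ) *ᵥ x)
          = x ⬝ᵥ (U *ᵥ (M *ᵥ (Uᵀ *ᵥ x))) := by
            simp [Matrix.mulVec_mulVec, Matrix.mul_assoc]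
        _ = (x ᵥ* U) ⬝ᵥ (M *ᵥ (Uᵀ *ᵥ x)) := Matrix.dotProduct_mulVec _ _ _
        _ = star (Uᵀ *ᵥ x) ⬝ᵥ (M *ᵥ (Uᵀ *ᵥ x)) := by
            rw [← Matrix.mulVec_transpose]; simp
    rw [key]
    exact hM.dotProduct_mulVec_pos hx'

lemma posdef_congr_iff {n : Type*} [Fintype n] [DecidableEq n]
    {M U : Matrix n n ℝ} (hU : U * Uᵀ = 1) :
    (U * M * Uᵀ).PosDef ↔ M.PosDef := by
  have hU' : Uᵀ * U = 1 := mul_eq_one_comm.mp hU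
  constructor
  · intro h
    have := posdef_congr (M := U * M * Uᵀ) (U := Uᵀ) (by simpa using hU') h
    have e : Uᵀ * (U * M * Uᵀ) * Uᵀᵀ = M := by
      rw [Matrix.transpose_transpose]
      calc Uᵀ * (U * M * Uᵀ) * U = (Uᵀ * U) * M * (Uᵀ * U) := by
            simp only [Matrix.mul_assoc]
          _ = M := by rw [hU']; simp
    rwa [e] at this
  · exact posdef_congr hU

/-- orthogonal-congruence reduction for the diagram
`(*−*,*−*)>*−*⋯`: the block matrix with corner `X` is positive definite iff
the block matrix with corner `X'` is. -/
theorem stmt15 {m : ℕ} (hm : 1 ≤ m) (Z : Matrix (Fin m) (Fin m) ℝ) (hZ : Z.IsSymm)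
    (Y : Matrix (Fin 5) (Fin m) ℝ)
    (hY : ∀ i j, Y i j = if i.val = 4 ∧ j.val = 0 then -1 else 0) :
    (Matrix.fromBlocks
        !![2, 0, -1, 0, 0;
           0, 2, 0, -1, 0;
           -1, 0, 2, 0, -1;
           0, -1, 0, 2, -1;
           0, 0, -1, -1, 2]
        Y Yᵀ Z).PosDef ↔
    (Matrix.fromBlocks
        !![2, -1, 0, 0, 0;
           -1, 2, 0, 0, 0;
           0, 0, 2, -1, 0;
           0, 0, -1, 2, -Real.sqrt 2;
           0, 0, 0, -Real.sqrt 2, 2]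
        Y Yᵀ Z).PosDef := by
  have hUY : Umat * Y = Y := by
    ext i j
    rw [Matrix.mul_apply, Fin.sum_univ_five]
    simp only [hY]
    fin_cases i <;>
      simp [Umat, show ((3:Fin 5):ℕ) = 3 from rfl, show ((4:Fin 5):ℕ) = 4 from rfl]
  have hYU : Yᵀ * Umatᵀ = Yᵀ := by
    rw [← Matrix.transpose_mul, hUY]
  set W : Matrix (Fin 5 ⊕ Fin m) (Fin 5 ⊕ Fin m) ℝ :=
    Matrix.fromBlocks Umat 0 0 1 with hWdef
  have hW : W * Wᵀ = 1 := by
    rw [hWdef, Matrix.fromBlocks_transpose, Matrix.fromBlocks_multiply]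
    simp [hUU, Matrix.fromBlocks_one]
  have hblock :
      (Matrix.fromBlocks
        !![2, -1, 0, 0, 0;
           -1, 2, 0, 0, 0;
           0, 0, 2, -1, 0;
           0, 0, -1, 2, -Real.sqrt 2;
           0, 0, 0, -Real.sqrt 2, 2]
        Y Yᵀ Z)
      = W * (Matrix.fromBlocks
        !![2, 0, -1, 0, 0;
           0, 2, 0, -1, 0;
           -1, 0, 2, 0, -1;
           0, -1, 0, 2, -1;
           0, 0, -1, -1, 2]
        Y Yᵀ Z) * Wᵀ := by
    rw [hWdef, Matrix.fromBlocks_transpose, Matrix.fromBlocks_multiply,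
      Matrix.fromBlocks_multiply]
    simp only [Matrix.transpose_zero, Matrix.transpose_one, Matrix.mul_zero, Matrix.zero_mul,
      Matrix.mul_one, Matrix.one_mul, add_zero, zero_add]
    rw [hUY, hYU, hUXU]
  rw [hblock]
  exact (posdef_congr_iff hW).symm
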